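/- Fix an integer s ≥ 2. With a = (2s−1,2s)(4s−1,4s) and b = (1,3,5,…,4s−1,2,4,6,…,4s) in Sym(4s), one has b^{2s} = (1,2)(3,4)···(4s−1,4s) = a · a^b · a^{b²} ··· a^{b^{s−1}}. -/

import Mathlib

/-!
In 0-based notation `b` is the `4s`-cycle `(0 2 4 … 4s-2 1 3 … 4s-1)`. It carries the pair
`{2k, 2k+1}` onto the pair `{2k+2, 2k+3}`, keeping parities, except that the last pair is carried
onto `{0, 1}` with the parities exchanged. So `b^{2s}` takes every pair once around the cycle and
exchanges its two points: it is the product of the pair transpositions `τ_k = (2k 2k+1)`.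

The same description gives `b τ_k b⁻¹ = τ_{k+1 mod 2s}`. As `a = τ_{s-1} τ_{2s-1}`, the conjugate
`b^i a b^{-i}` is `τ_{s-1+i} τ_{2s-1+i mod 2s}`, and for `i < s` these factors contain every `τ_k`
exactly once. Both products are then evaluated pointwise: each point is moved by exactly one factor.
-/

open Equiv

theorem Equiv.Perm.prod_ofFn_apply_of_forall_ne_fix {α : Type*} :
    ∀ {n : ℕ} (f : Fin n → Perm α) {S : Set α} {x : α} (j : Fin n), x ∈ S → f j x ∈ S →
      (∀ i ≠ j, ∀ y ∈ S, f i y = y) → (List.ofFn f).prod x = f j x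
  | 0, _, _, _, j, _, _, _ => j.elim0
  | n + 1, f, S, x, j, hx, hj, hfix => by
    rw [List.ofFn_succ, List.prod_cons, Perm.mul_apply]
    cases j using Fin.cases with
    | zero =>
      have hrest : (List.ofFn fun i : Fin n => f i.succ).prod ∈ fixingSubgroup (Perm α) S :=
        Subgroup.list_prod_mem _ fun g hg => by
          obtain ⟨i, rfl⟩ := List.mem_ofFn.mp hg
          exact (mem_fixingSubgroup_iff _).mpr (hfix i.succ (Fin.succ_ne_zero i))
      exact congrArg (f 0) ((mem_fixingSubgroup_iff _).mp hrest x hx)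
    | succ j =>
      rw [Perm.prod_ofFn_apply_of_forall_ne_fix (fun i => f i.succ) j hx hj
        fun i hi => hfix i.succ ((Fin.succ_injective _).ne hi)]
      exact hfix 0 (Fin.succ_ne_zero j).symm _ hj

def pairSwap {n : ℕ} (k : ℕ) : Perm (Fin n) :=
  if h : 2 * k + 1 < n then swap ⟨2 * k, by omega⟩ ⟨2 * k + 1, h⟩ else 1

section PairSwap

variable {n : ℕ}

theorem pairSwap_of_lt {k : ℕ} (hk : 2 * k + 1 < n) :
    pairSwap k = swap (⟨2 * k, by omega⟩ : Fin n) ⟨2 * k + 1, hk⟩ :=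
  dif_pos hk

theorem pairSwap_apply_of_ne {k : ℕ} {x : Fin n} (hx : (x : ℕ) / 2 ≠ k) : pairSwap k x = x := by
  unfold pairSwap
  split_ifs
  · exact swap_apply_of_ne_of_ne (by simp [Fin.ext_iff]; omega) (by simp [Fin.ext_iff]; omega)
  · rfl

theorem pairSwap_apply_val {k : ℕ} (hk : 2 * k + 1 < n) {x : Fin n} (hx : (x : ℕ) / 2 = k) :
    (pairSwap k x : ℕ) = if (x : ℕ) % 2 = 0 then (x : ℕ) + 1 else (x : ℕ) - 1 := by
  rw [pairSwap_of_lt hk, swap_apply_def]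
  split_ifs <;> simp_all [Fin.ext_iff] <;> omega

theorem pairSwap_apply_val_div_two (k : ℕ) (x : Fin n) : (pairSwap k x : ℕ) / 2 = (x : ℕ) / 2 := by
  by_cases hx : (x : ℕ) / 2 = k
  · unfold pairSwap
    split_ifs
    · rw [swap_apply_def]; split_ifs <;> simp_all [Fin.ext_iff]; omega
    · rfl
  · rw [pairSwap_apply_of_ne hx]

theorem prod_ofFn_pairSwap_apply_val {m : ℕ} (hmn : 2 * m ≤ n) {x : Fin n} (hx : (x : ℕ) / 2 < m) :
    ((List.ofFn fun k : Fin m => (pairSwap k : Perm (Fin n))).prod x : ℕ) =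
      if (x : ℕ) % 2 = 0 then (x : ℕ) + 1 else (x : ℕ) - 1 := by
  rw [Perm.prod_ofFn_apply_of_forall_ne_fix _ ⟨(x : ℕ) / 2, hx⟩
    (S := {y : Fin n | (y : ℕ) / 2 = x / 2}) rfl (pairSwap_apply_val_div_two _ x)
    fun i hi y (hy : (y : ℕ) / 2 = x / 2) =>
      pairSwap_apply_of_ne (hy ▸ fun h => hi (Fin.ext h.symm))]
  exact pairSwap_apply_val (by omega) rfl

end PairSwap

theorem Nat.two_mul_sub_one_add_mod {s i : ℕ} (hi : i < s) :
    (2 * s - 1 + i) % (2 * s) = 2 * s - 1 ∧ i = 0 ∨ (2 * s - 1 + i) % (2 * s) + 1 = i := by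
  rcases Nat.eq_zero_or_pos i with h | h
  · exact .inl ⟨by rw [h, Nat.mod_eq_of_lt (by omega)]; rfl, h⟩
  · right
    rw [Nat.mod_eq_sub_mod (by omega), Nat.mod_eq_of_lt (by omega)]
    omega

/-- `b` is the cycle `(0 2 4 … 4s-2 1 3 … 4s-1)`. -/
def IsEvenOddCycle {s : ℕ} (b : Perm (Fin (4 * s))) : Prop :=
  ∀ i : Fin (4 * s), (b i : ℕ) =
    if (i : ℕ) % 2 = 0 then (if (i : ℕ) = 4 * s - 2 then 1 else (i : ℕ) + 2)
    else (if (i : ℕ) = 4 * s - 1 then 0 else (i : ℕ) + 2)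

namespace IsEvenOddCycle

variable {s : ℕ} {b : Perm (Fin (4 * s))}

theorem apply_val_of_lt (hb : IsEvenOddCycle b) {x : Fin (4 * s)} (hx : (x : ℕ) + 2 < 4 * s) :
    (b x : ℕ) = x + 2 := by
  rw [hb]; split_ifs <;> omega

theorem pow_apply_val_of_lt (hb : IsEvenOddCycle b) :
    ∀ (j : ℕ) {x : Fin (4 * s)}, (x : ℕ) + 2 * j < 4 * s → ((b ^ j) x : ℕ) = x + 2 * j
  | 0, x, _ => rfl
  | j + 1, x, hx => by
    have hbx := hb.apply_val_of_lt (x := x) (by omega)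
    rw [pow_succ, Perm.mul_apply, hb.pow_apply_val_of_lt j (by omega), hbx]
    ring

theorem pow_two_mul_apply_val (hb : IsEvenOddCycle b) (x : Fin (4 * s)) :
    ((b ^ (2 * s)) x : ℕ) = if (x : ℕ) % 2 = 0 then (x : ℕ) + 1 else (x : ℕ) - 1 := by
  have hx := x.2
  set k := (x : ℕ) / 2
  -- `b^(2s-1-k)` carries `x` to the last pair, `b` flips it onto the first, `b^k` carries it back.
  have hlast : ((b ^ (2 * s - 1 - k)) x : ℕ) = x + 2 * (2 * s - 1 - k) :=
    hb.pow_apply_val_of_lt _ (by omega)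
  have hfirst : ((b * b ^ (2 * s - 1 - k)) x : ℕ) = 1 - (x : ℕ) % 2 := by
    rw [Perm.mul_apply, hb, hlast]; split_ifs <;> omega
  have hsplit : b ^ (2 * s) = b ^ k * (b * b ^ (2 * s - 1 - k)) := by
    rw [← pow_succ', ← pow_add]; congr 1; omega
  rw [hsplit, Perm.mul_apply, hb.pow_apply_val_of_lt k (by omega), hfirst]
  split_ifs <;> omega

theorem conj_pairSwap (hb : IsEvenOddCycle b) {k : ℕ} (hk : k < 2 * s) :
    b * pairSwap k * b⁻¹ = pairSwap ((k + 1) % (2 * s)) := by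
  rw [pairSwap_of_lt (by omega), ← swap_apply_apply]
  rcases Nat.lt_or_ge (k + 1) (2 * s) with hk' | hk'
  · rw [Nat.mod_eq_of_lt hk', pairSwap_of_lt (by omega)]
    congr 1 <;> ext <;> rw [hb.apply_val_of_lt (by simp; omega)] <;> simp <;> ring
  · rw [show k + 1 = 2 * s by omega, Nat.mod_self, pairSwap_of_lt (by omega), swap_comm]
    congr 1 <;> ext <;> rw [hb] <;> simp <;> omega

theorem pow_conj_pairSwap (hb : IsEvenOddCycle b) :
    ∀ (i : ℕ) {k : ℕ}, k < 2 * s → b ^ i * pairSwap k * (b ^ i)⁻¹ = pairSwap ((k + i) % (2 * s))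
  | 0, k, hk => by simp [Nat.mod_eq_of_lt hk]
  | i + 1, k, hk => by
    have hstep : b ^ (i + 1) * pairSwap k * (b ^ (i + 1))⁻¹ =
        b ^ i * (b * pairSwap k * b⁻¹) * (b ^ i)⁻¹ := by group
    rw [hstep, hb.conj_pairSwap hk, hb.pow_conj_pairSwap i (Nat.mod_lt _ (by omega)),
      Nat.mod_add_mod, add_assoc, add_comm 1]

theorem pow_two_mul_eq_prod_pairSwap (hb : IsEvenOddCycle b) :
    b ^ (2 * s) = (List.ofFn fun k : Fin (2 * s) => (pairSwap k : Perm (Fin (4 * s)))).prod := by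
  ext x
  rw [hb.pow_two_mul_apply_val, prod_ofFn_pairSwap_apply_val (by omega) (by omega)]

theorem pow_conj_pairSwap_mul_pairSwap (hb : IsEvenOddCycle b) {i : ℕ} (hi : i < s) :
    b ^ i * (pairSwap (s - 1) * pairSwap (2 * s - 1)) * (b ^ i)⁻¹ =
      pairSwap (s - 1 + i) * pairSwap ((2 * s - 1 + i) % (2 * s)) := by
  calc _ = (b ^ i * pairSwap (s - 1) * (b ^ i)⁻¹) * (b ^ i * pairSwap (2 * s - 1) * (b ^ i)⁻¹) :=
        by group
    _ = _ := by
      rw [hb.pow_conj_pairSwap i (by omega), hb.pow_conj_pairSwap i (by omega),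
        Nat.mod_eq_of_lt (by omega : s - 1 + i < 2 * s)]

theorem prod_conj_eq_prod_pairSwap (hb : IsEvenOddCycle b) (hs : 0 < s) :
    (List.ofFn fun i : Fin s => b ^ (i : ℕ) * (pairSwap (s - 1) * pairSwap (2 * s - 1)) *
      (b ^ (i : ℕ))⁻¹).prod =
      (List.ofFn fun k : Fin (2 * s) => (pairSwap k : Perm (Fin (4 * s)))).prod := by
  simp only [fun i : Fin s => hb.pow_conj_pairSwap_mul_pairSwap i.isLt]
  ext x
  have hx := x.2
  set m := (x : ℕ) / 2
  obtain ⟨j, hjs, hj⟩ : ∃ j < s, m = s - 1 + j ∨ m = (2 * s - 1 + j) % (2 * s) := by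
    by_cases h : s - 1 ≤ m ∧ m ≤ 2 * s - 2
    · exact ⟨m - (s - 1), by omega, .inl (by omega)⟩
    by_cases h' : m = 2 * s - 1
    · exact ⟨0, hs, .inr (by have := Nat.two_mul_sub_one_add_mod hs; omega)⟩
    · have := Nat.two_mul_sub_one_add_mod (s := s) (i := m + 1) (by omega)
      exact ⟨m + 1, by omega, .inr (by omega)⟩
  have hqj := Nat.two_mul_sub_one_add_mod hjs
  have hfix (i : Fin s) (hi : i ≠ ⟨j, hjs⟩) (y : Fin (4 * s)) (hy : (y : ℕ) / 2 = m) :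
      (pairSwap (s - 1 + i) * pairSwap ((2 * s - 1 + i) % (2 * s)) : Perm (Fin (4 * s))) y = y := by
    have hqi := Nat.two_mul_sub_one_add_mod i.isLt
    have hij : (i : ℕ) ≠ j := fun h => hi (Fin.ext h)
    rw [Perm.mul_apply, pairSwap_apply_of_ne (x := y) (by omega), pairSwap_apply_of_ne (by omega)]
  have hjx : ((pairSwap (s - 1 + j) * pairSwap ((2 * s - 1 + j) % (2 * s)) :
      Perm (Fin (4 * s))) x : ℕ) / 2 = m := by
    rw [Perm.mul_apply, pairSwap_apply_val_div_two, pairSwap_apply_val_div_two]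
  rw [Perm.prod_ofFn_apply_of_forall_ne_fix _ ⟨j, hjs⟩ (S := {y : Fin (4 * s) | (y : ℕ) / 2 = m})
    rfl hjx hfix, prod_ofFn_pairSwap_apply_val (by omega) (by omega), Perm.mul_apply]
  dsimp only
  rcases hj with hj | hj
  · rw [pairSwap_apply_of_ne (x := x) (by omega), pairSwap_apply_val (by omega) hj]
  · rw [pairSwap_apply_of_ne (k := s - 1 + j) (by rw [pairSwap_apply_val_div_two]; omega),
      pairSwap_apply_val (by omega) hj]

end IsEvenOddCycle

/-- Fix `s ≥ 2`. With `a = (2s−1,2s)(4s−1,4s)` and `b = (1,3,5,…,4s−1,2,4,6,…,4s)` in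
`Sym(4s)`, one has `b^{2s} = (1,2)(3,4)···(4s−1,4s) = a · a^b · a^{b²} ··· a^{b^{s−1}}`.

Here `Sym(4s)` is realized as `Equiv.Perm (Fin (4s))` with points `0,…,4s−1` corresponding
to `1,…,4s`. Since the paper composes permutations left-to-right while Mathlib's
`Equiv.Perm` composes right-to-left, the paper's conjugate `a^{b^i} = b^{-i} a b^{i}` is
`b^i * a * (b^i)⁻¹` here (the factors of both products below commute pairwise, so the order
of the factors is immaterial). -/
theorem stmt6 (s : ℕ) (hs : 2 ≤ s)
    (a b : Equiv.Perm (Fin (4 * s)))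
    (ha : a = Equiv.swap ⟨2 * s - 2, by omega⟩ ⟨2 * s - 1, by omega⟩ *
      Equiv.swap ⟨4 * s - 2, by omega⟩ ⟨4 * s - 1, by omega⟩)
    (hb : ∀ i : Fin (4 * s), (b i : ℕ) =
      if (i : ℕ) % 2 = 0 then (if (i : ℕ) = 4 * s - 2 then 1 else (i : ℕ) + 2)
      else (if (i : ℕ) = 4 * s - 1 then 0 else (i : ℕ) + 2)) :
    b ^ (2 * s) =
      (List.ofFn fun i : Fin (2 * s) =>
        Equiv.swap (⟨2 * (i : ℕ), by have := i.2; omega⟩ : Fin (4 * s))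
          ⟨2 * (i : ℕ) + 1, by have := i.2; omega⟩).prod ∧
    b ^ (2 * s) =
      (List.ofFn fun i : Fin s => b ^ (i : ℕ) * a * (b ^ (i : ℕ))⁻¹).prod := by
  have hb : IsEvenOddCycle b := hb
  have ha : a = pairSwap (s - 1) * pairSwap (2 * s - 1) := by
    rw [ha, pairSwap_of_lt (by omega), pairSwap_of_lt (by omega)]
    congr 1 <;> congr 1 <;> ext <;> simp <;> omega
  refine ⟨?_, ?_⟩
  · rw [hb.pow_two_mul_eq_prod_pairSwap]
    congr 1
    exact List.ofFn_inj.mpr (funext fun i => pairSwap_of_lt _)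
  · rw [ha, hb.prod_conj_eq_prod_pairSwap (by omega), hb.pow_two_mul_eq_prod_pairSwap]
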